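/- arXiv:cs/0402039 — 7 statements merged into one kernel-verified Lean document; each statement's English description precedes it below -/
import Mathlib

section
/- Let m_r, d_r, m_f, d_f be real numbers with 0 ≤ m_r ≤ d_r and 0 ≤ m_f ≤ d_f. Then for every signal u there exists a signal x such that for all t ∈ ℝ, ⋀_{ξ∈[t−d_r, t−d_r+m_r]} u(ξ) ≤ x(t) ≤ ⋁_{ξ∈[t−d_f, t−d_f+m_f]} u(ξ), if and only if the consistency condition d_r ≥ d_f − m_f and d_f ≥ d_r − m_r holds. -/
open Set

/-- A signal: a `Bool`-valued function of real time which is constant before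
some `t 0` and constant on each interval `[t k, t (k+1))`, where `t` is a
strictly increasing sequence tending to `+∞`. -/
def IsSignal (x : ℝ → Bool) : Prop :=
  ∃ t : ℕ → ℝ, StrictMono t ∧ Filter.Tendsto t Filter.atTop Filter.atTop ∧
    (∀ a ∈ Set.Iio (t 0), ∀ b ∈ Set.Iio (t 0), x a = x b) ∧
    (∀ k : ℕ, ∀ s ∈ Set.Ico (t k) (t (k + 1)), x s = x (t k))

-- The infimum (logical AND) of `u` over a set `A` (true on the empty set).
open Classical in
noncomputable def infOn (u : ℝ → Bool) (A : Set ℝ) : Bool :=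
  decide (∀ ξ ∈ A, u ξ = true)

-- The supremum (logical OR) of `u` over a set `A` (false on the empty set).
open Classical in
noncomputable def supOn (u : ℝ → Bool) (A : Set ℝ) : Bool :=
  decide (∃ ξ ∈ A, u ξ = true)

-- The left limit `x(t-0)`: the constant value of `x` on `(t-ε, t)` for small `ε > 0`.
open Classical in
noncomputable def leftVal (x : ℝ → Bool) (t : ℝ) : Bool :=
  decide (∃ ε > 0, ∀ s ∈ Set.Ioo (t - ε) t, x s = true)

/-- The bounded delay condition. -/
noncomputable def SolBDC (mr dr mf df : ℝ) (u : ℝ → Bool) : Set (ℝ → Bool) :=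
  {x | IsSignal x ∧ ∀ t : ℝ,
    infOn u (Set.Icc (t - dr) (t - dr + mr)) ≤ x t ∧
    x t ≤ supOn u (Set.Icc (t - df) (t - df + mf))}

/-- The absolute inertial condition. -/
noncomputable def SolAIC (δr δf : ℝ) : Set (ℝ → Bool) :=
  {x | IsSignal x ∧ ∀ t : ℝ,
    (!leftVal x t && x t) ≤ infOn x (Set.Icc t (t + δr)) ∧
    (leftVal x t && !x t) ≤ infOn (fun ξ => !x ξ) (Set.Icc t (t + δf))}

/-- The relative inertial condition. -/
noncomputable def SolRIC (μr δr μf δf : ℝ) (u : ℝ → Bool) : Set (ℝ → Bool) :=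
  {x | IsSignal x ∧ ∀ t : ℝ,
    (!leftVal x t && x t) ≤ infOn u (Set.Icc (t - δr) (t - δr + μr)) ∧
    (leftVal x t && !x t) ≤ infOn (fun ξ => !u ξ) (Set.Icc (t - δf) (t - δf + μf))}

lemma infOn_eq_true_iff {u : ℝ → Bool} {A : Set ℝ} :
    infOn u A = true ↔ ∀ ξ ∈ A, u ξ = true := by
  classical
  rw [infOn, decide_eq_true_eq]

lemma supOn_eq_true_iff {u : ℝ → Bool} {A : Set ℝ} :
    supOn u A = true ↔ ∃ ξ ∈ A, u ξ = true := by
  classical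
  rw [supOn, decide_eq_true_eq]

lemma infOn_le_of_mem {u : ℝ → Bool} {A : Set ℝ} {s : ℝ} (hs : s ∈ A) :
    infOn u A ≤ u s := by
  by_cases h : infOn u A = true
  · rw [h]
    exact (infOn_eq_true_iff.mp h s hs).ge
  · simp only [Bool.not_eq_true] at h
    rw [h]; exact Bool.false_le _

lemma le_supOn_of_mem {u : ℝ → Bool} {A : Set ℝ} {s : ℝ} (hs : s ∈ A) :
    u s ≤ supOn u A := by
  by_cases h : u s = true
  · rw [h, supOn_eq_true_iff.mpr ⟨s, hs, h⟩]
  · simp only [Bool.not_eq_true] at h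
    rw [h]; exact Bool.false_le _

lemma IsSignal.shift {u : ℝ → Bool} (h : IsSignal u) (c : ℝ) :
    IsSignal (fun t => u (t - c)) := by
  obtain ⟨t, ht, htend, h0, hk⟩ := h
  refine ⟨fun k => t k + c, fun a b hab => by simpa using ht hab,
    Filter.tendsto_atTop_add_const_right _ _ htend, ?_, ?_⟩
  · intro a ha b hb
    exact h0 _ (by simpa [Set.mem_Iio, sub_lt_iff_lt_add] using ha)
      _ (by simpa [Set.mem_Iio, sub_lt_iff_lt_add] using hb)
  · intro k s hs
    have hs' : s - c ∈ Set.Ico (t k) (t (k + 1)) := by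
      constructor
      · simpa [le_sub_iff_add_le, add_comm] using hs.1
      · simpa [sub_lt_iff_lt_add, add_comm] using hs.2
    simpa using hk k _ hs'

lemma isSignal_step (L : ℝ) (hL : 0 < L) :
    IsSignal (fun t => decide (t ∈ Set.Ico (0:ℝ) L)) := by
  classical
  refine ⟨fun k => (k : ℝ) * L, ?_, ?_, ?_, ?_⟩
  · intro a b hab
    exact mul_lt_mul_of_pos_right (by exact_mod_cast hab) hL
  · exact Filter.Tendsto.atTop_mul_const hL tendsto_natCast_atTop_atTop
  · intro a ha b hb
    simp only [Nat.cast_zero, zero_mul, Set.mem_Iio] at ha hb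
    simp [Set.mem_Ico, not_le.mpr ha, not_le.mpr hb, ha.not_ge, hb.not_ge]
  · intro k s hs
    rcases Nat.eq_zero_or_pos k with rfl | hk
    · push_cast at hs
      simp only [zero_mul, one_mul] at hs
      simp [Set.mem_Ico, hs.1, hs.2, hL]
    · have h1 : L ≤ (k : ℝ) * L := le_mul_of_one_le_left hL.le (by exact_mod_cast hk)
      have h2 : L ≤ s := h1.trans hs.1
      simp [Set.mem_Ico, not_lt.mpr h2, not_lt.mpr h1]

lemma IsSignal.not {u : ℝ → Bool} (h : IsSignal u) : IsSignal (fun t => !u t) := by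
  obtain ⟨t, ht, htend, h0, hk⟩ := h
  exact ⟨t, ht, htend, fun a ha b hb => congrArg Bool.not (h0 a ha b hb),
    fun k s hs => congrArg Bool.not (hk k s hs)⟩

theorem bdc_consistency (mr dr mf df : ℝ)
    (hmr : 0 ≤ mr) (hmrdr : mr ≤ dr) (hmf : 0 ≤ mf) (hmfdf : mf ≤ df) :
    (∀ u : ℝ → Bool, IsSignal u → ∃ x, x ∈ SolBDC mr dr mf df u) ↔
      (dr ≥ df - mf ∧ df ≥ dr - mr) := by
  constructor
  · intro H
    constructor
    · by_contra hcon
      push_neg at hcon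
      set L : ℝ := mr + 1 with hLdef
      have hL : 0 < L := by linarith
      set u : ℝ → Bool := fun t => decide (t ∈ Set.Ico (0:ℝ) L) with hu
      obtain ⟨x, hxsig, hx⟩ := H u (isSignal_step L hL)
      obtain ⟨h1, h2⟩ := hx dr
      have hinf : infOn u (Set.Icc (dr - dr) (dr - dr + mr)) = true := by
        rw [infOn_eq_true_iff]
        intro ξ hξ
        simp only [sub_self, zero_add] at hξ
        have hm : ξ ∈ Set.Ico (0:ℝ) L := ⟨hξ.1, by linarith [hξ.2]⟩
        simp only [hu]
        exact decide_eq_true hm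
      have hsup : supOn u (Set.Icc (dr - df) (dr - df + mf)) = false := by
        rw [Bool.eq_false_iff]
        intro hs
        obtain ⟨ξ, hξ, hξt⟩ := supOn_eq_true_iff.mp hs
        have hneg : ξ < 0 := by linarith [hξ.2]
        simp only [hu, decide_eq_true_eq, Set.mem_Ico] at hξt
        linarith [hξt.1]
      rw [hinf] at h1
      rw [hsup] at h2
      revert h1 h2
      cases x dr <;> simp
    · by_contra hcon
      push_neg at hcon
      set L : ℝ := mf + 1 with hLdef
      have hL : 0 < L := by linarith
      set u : ℝ → Bool := fun t => !decide (t ∈ Set.Ico (0:ℝ) L) with hu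
      obtain ⟨x, hxsig, hx⟩ := H u ((isSignal_step L hL).not)
      obtain ⟨h1, h2⟩ := hx df
      have hinf : infOn u (Set.Icc (df - dr) (df - dr + mr)) = true := by
        rw [infOn_eq_true_iff]
        intro ξ hξ
        have hneg : ξ < 0 := by linarith [hξ.2]
        simp only [hu, Bool.not_eq_true', decide_eq_false_iff_not, Set.mem_Ico]
        intro hc
        linarith [hc.1]
      have hsup : supOn u (Set.Icc (df - df) (df - df + mf)) = false := by
        rw [Bool.eq_false_iff]
        intro hs
        obtain ⟨ξ, hξ, hξt⟩ := supOn_eq_true_iff.mp hs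
        simp only [sub_self, zero_add] at hξ
        have h3 : ξ ∈ Set.Ico (0:ℝ) L := ⟨hξ.1, by linarith [hξ.2]⟩
        simp only [hu, Bool.not_eq_true', decide_eq_false_iff_not] at hξt
        exact hξt h3
      rw [hinf] at h1
      rw [hsup] at h2
      revert h1 h2
      cases x df <;> simp
  · rintro ⟨hc1, hc2⟩ u husig
    set c : ℝ := max (dr - mr) (df - mf) with hc
    have hcdr : c ≤ dr := max_le (by linarith) (by linarith)
    have hcdf : c ≤ df := max_le (by linarith) (by linarith)
    have hcl : dr - mr ≤ c := le_max_left _ _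
    have hcr : df - mf ≤ c := le_max_right _ _
    refine ⟨fun t => u (t - c), husig.shift c, fun t => ⟨?_, ?_⟩⟩
    · exact infOn_le_of_mem ⟨by linarith, by linarith⟩
    · exact le_supOn_of_mem ⟨by linarith, by linarith⟩
end

section
/- Let 0 ≤ m_r ≤ d_r, 0 ≤ m_f ≤ d_f and 0 ≤ m_r′ ≤ d_r′, 0 ≤ m_f′ ≤ d_f′ be reals such that d_r ≥ d_f − m_f, d_f ≥ d_r − m_r, d_r′ ≥ d_f′ − m_f′ and d_f′ ≥ d_r′ − m_r′. Set d_r″ = max(d_r, d_r′), d_f″ = max(d_f, d_f′), m_r″ = d_r″ − min(d_r − m_r, d_r′ − m_r′), m_f″ = d_f″ − min(d_f − m_f, d_f′ − m_f′). Then d_r″ ≥ d_f″ − m_f″ and d_f″ ≥ d_r″ − m_r″, and for every signal u, Sol_BDC^{m_r,d_r,m_f,d_f}(u) ∪ Sol_BDC^{m_r′,d_r′,m_f′,d_f′}(u) ⊆ Sol_BDC^{m_r″,d_r″,m_f″,d_f″}(u). -/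
open Set

lemma infOn_anti (u : ℝ → Bool) {A B : Set ℝ} (h : A ⊆ B) : infOn u B ≤ infOn u A := by
  refine Bool.le_iff_imp.mpr fun hB => ?_
  simp only [infOn, decide_eq_true_eq] at hB ⊢
  exact fun ξ hξ => hB ξ (h hξ)

lemma supOn_mono (u : ℝ → Bool) {A B : Set ℝ} (h : A ⊆ B) : supOn u A ≤ supOn u B := by
  refine Bool.le_iff_imp.mpr fun hA => ?_
  simp only [supOn, decide_eq_true_eq] at hA ⊢
  obtain ⟨ξ, hξ, hu⟩ := hA
  exact ⟨ξ, h hξ, hu⟩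

theorem bdc_union_subset (mr dr mf df : ℝ)
    (hmr : 0 ≤ mr) (hmrdr : mr ≤ dr) (hmf : 0 ≤ mf) (hmfdf : mf ≤ df) (hcc1 : dr ≥ df - mf) (hcc2 : df ≥ dr - mr)
    (mr' dr' mf' df' : ℝ)
    (hmr' : 0 ≤ mr') (hmrdr' : mr' ≤ dr') (hmf' : 0 ≤ mf') (hmfdf' : mf' ≤ df')
    (hcc1' : dr' ≥ df' - mf') (hcc2' : df' ≥ dr' - mr')
    (dr'' df'' mr'' mf'' : ℝ)
    (hdr'' : dr'' = max dr dr') (hdf'' : df'' = max df df')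
    (hmr'' : mr'' = dr'' - min (dr - mr) (dr' - mr'))
    (hmf'' : mf'' = df'' - min (df - mf) (df' - mf')) :
    (dr'' ≥ df'' - mf'' ∧ df'' ≥ dr'' - mr'') ∧
      ∀ u : ℝ → Bool, IsSignal u →
        SolBDC mr dr mf df u ∪ SolBDC mr' dr' mf' df' u ⊆
          SolBDC mr'' dr'' mf'' df'' u := by
  have hfirst : dr'' ≥ df'' - mf'' ∧ df'' ≥ dr'' - mr'' := by
    constructor
    · rw [hmf'', hdr'', hdf'']
      have := min_le_left (df - mf) (df' - mf')
      have := min_le_right (df - mf) (df' - mf')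
      have h1 := le_max_left dr dr'
      have h2 := le_max_right dr dr'
      rcases min_cases (df - mf) (df' - mf') with ⟨he, _⟩ | ⟨he, _⟩ <;> rw [he] <;> linarith
    · rw [hmr'', hdr'', hdf'']
      have h1 := le_max_left df df'
      have h2 := le_max_right df df'
      rcases min_cases (dr - mr) (dr' - mr') with ⟨he, _⟩ | ⟨he, _⟩ <;> rw [he] <;> linarith
  refine ⟨hfirst, fun u _ x hx => ?_⟩
  have hdr1 : dr ≤ dr'' := hdr'' ▸ le_max_left _ _
  have hdr2 : dr' ≤ dr'' := hdr'' ▸ le_max_right _ _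
  have hdf1 : df ≤ df'' := hdf'' ▸ le_max_left _ _
  have hdf2 : df' ≤ df'' := hdf'' ▸ le_max_right _ _
  have hm1 : min (dr - mr) (dr' - mr') ≤ dr - mr := min_le_left _ _
  have hm2 : min (dr - mr) (dr' - mr') ≤ dr' - mr' := min_le_right _ _
  have hn1 : min (df - mf) (df' - mf') ≤ df - mf := min_le_left _ _
  have hn2 : min (df - mf) (df' - mf') ≤ df' - mf' := min_le_right _ _
  rcases hx with ⟨hsig, hc⟩ | ⟨hsig, hc⟩ <;> refine ⟨hsig, fun t => ?_⟩ <;> obtain ⟨h1, h2⟩ := hc t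
  · constructor
    · exact le_trans (infOn_anti u (Set.Icc_subset_Icc (by linarith) (by rw [hmr'']; linarith))) h1
    · exact le_trans h2 (supOn_mono u (Set.Icc_subset_Icc (by linarith) (by rw [hmf'']; linarith)))
  · constructor
    · exact le_trans (infOn_anti u (Set.Icc_subset_Icc (by linarith) (by rw [hmr'']; linarith))) h1
    · exact le_trans h2 (supOn_mono u (Set.Icc_subset_Icc (by linarith) (by rw [hmf'']; linarith)))
end

section
/- Let 0 ≤ m_r ≤ d_r, 0 ≤ m_f ≤ d_f be reals with d_r ≥ d_f − m_f and d_f ≥ d_r − m_r. The following are equivalent: (i) Sol_BDC^{m_r,d_r,m_f,d_f} is symmetrical, i.e., for all signals u, x: x ∈ Sol_BDC^{m_r,d_r,m_f,d_f}(u) if and only if the pointwise negation ¬x belongs to Sol_BDC^{m_r,d_r,m_f,d_f}(¬u); (ii) d_r = d_f and m_r = m_f. -/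
open Set

lemma isSignal_step_s8 (c : ℝ) : IsSignal (fun t => decide (c ≤ t)) := by
  refine ⟨fun k => c + k, ?_, ?_, ?_, ?_⟩
  · intro a b hab
    have : (a : ℝ) < b := by exact_mod_cast hab
    show c + (a : ℝ) < c + b
    linarith
  · exact Filter.tendsto_atTop_add_const_left _ c
      (tendsto_natCast_atTop_atTop)
  · intro a ha b hb
    simp only [Set.mem_Iio, Nat.cast_zero, add_zero] at ha hb
    simp [not_le.mpr ha, not_le.mpr hb]
  · intro k s hs
    have h1 : c + (k : ℝ) ≤ s := hs.1
    have hck : c ≤ c + (k : ℝ) := le_add_of_nonneg_right (Nat.cast_nonneg k)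
    simp [le_trans hck h1, hck]

lemma bool_not_le_not {a b : Bool} (h : b ≤ a) : (!a) ≤ (!b) := by
  revert a b; decide

lemma infOn_not (u : ℝ → Bool) (A : Set ℝ) :
    infOn (fun ξ => !u ξ) A = !supOn u A := by
  simp only [infOn, supOn]
  rw [Bool.eq_iff_iff]
  simp only [decide_eq_true_eq, Bool.not_eq_true', decide_eq_false_iff_not,
    Bool.not_eq_true]
  constructor
  · rintro h ⟨ξ, hξ, hu⟩
    rw [h ξ hξ] at hu
    exact Bool.false_ne_true hu
  · intro h ξ hξ
    exact Bool.eq_false_iff.mpr fun hu => h ⟨ξ, hξ, hu⟩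

lemma supOn_not (u : ℝ → Bool) (A : Set ℝ) :
    supOn (fun ξ => !u ξ) A = !infOn u A := by
  simp only [infOn, supOn]
  rw [Bool.eq_iff_iff]
  simp only [decide_eq_true_eq, Bool.not_eq_true', decide_eq_false_iff_not,
    Bool.not_eq_true]
  constructor
  · rintro ⟨ξ, hξ, hu⟩ hall
    rw [hall ξ hξ] at hu
    simp at hu
  · intro h
    by_contra hc
    push_neg at hc
    refine h fun ξ hξ => ?_
    by_contra hne
    exact hc ξ hξ (Bool.eq_false_iff.mpr hne)

lemma infOn_step (c a m : ℝ) (hm : 0 ≤ m) :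
    infOn (fun t => decide (c ≤ t)) (Set.Icc a (a + m)) = decide (c ≤ a) := by
  simp only [infOn, decide_eq_decide, decide_eq_true_eq]
  constructor
  · intro h; exact h a ⟨le_refl a, by linarith⟩
  · intro h ξ hξ; exact le_trans h hξ.1

lemma supOn_step (c a m : ℝ) (hm : 0 ≤ m) :
    supOn (fun t => decide (c ≤ t)) (Set.Icc a (a + m)) = decide (c ≤ a + m) := by
  simp only [supOn, decide_eq_decide, decide_eq_true_eq]
  constructor
  · rintro ⟨ξ, hξ, h⟩; exact le_trans h hξ.2
  · intro h; exact ⟨a + m, ⟨by linarith, le_refl _⟩, h⟩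

lemma decide_le_decide_iff {p q : Prop} [Decidable p] [Decidable q] :
    decide p ≤ decide q ↔ (p → q) := by
  by_cases hp : p <;> by_cases hq : q <;> simp [hp, hq]

lemma mem_step (mr dr mf df c : ℝ) (hmr : 0 ≤ mr) (hmf : 0 ≤ mf) :
    ((fun t => decide (c ≤ t)) ∈ SolBDC mr dr mf df (fun t => decide ((0:ℝ) ≤ t))) ↔
      (df - mf ≤ c ∧ c ≤ dr) := by
  simp only [SolBDC, Set.mem_setOf_eq]
  constructor
  · rintro ⟨-, h⟩
    constructor
    · have := ((h c).2)
      rw [supOn_step _ _ _ hmf, decide_le_decide_iff] at this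
      linarith [this (le_refl c)]
    · have := ((h dr).1)
      rw [infOn_step _ _ _ hmr, decide_le_decide_iff] at this
      linarith [this (by linarith : (0:ℝ) ≤ dr - dr)]
  · rintro ⟨h1, h2⟩
    refine ⟨isSignal_step_s8 c, fun t => ⟨?_, ?_⟩⟩
    · rw [infOn_step _ _ _ hmr, decide_le_decide_iff]
      intro h; linarith
    · rw [supOn_step _ _ _ hmf, decide_le_decide_iff]
      intro h; linarith

lemma mem_step_not (mr dr mf df c : ℝ) (hmr : 0 ≤ mr) (hmf : 0 ≤ mf) :
    ((fun t => !decide (c ≤ t)) ∈ SolBDC mr dr mf df (fun t => !decide ((0:ℝ) ≤ t))) ↔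
      (dr - mr ≤ c ∧ c ≤ df) := by
  have key : ∀ t : ℝ,
      (infOn (fun ξ => !decide ((0:ℝ) ≤ ξ)) (Set.Icc (t - dr) (t - dr + mr)) =
        !decide ((0:ℝ) ≤ t - dr + mr)) ∧
      (supOn (fun ξ => !decide ((0:ℝ) ≤ ξ)) (Set.Icc (t - df) (t - df + mf)) =
        !decide ((0:ℝ) ≤ t - df)) := by
    intro t
    constructor
    · rw [infOn_not, supOn_step _ _ _ hmr]
    · rw [supOn_not, infOn_step _ _ _ hmf]
  simp only [SolBDC, Set.mem_setOf_eq]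
  constructor
  · rintro ⟨-, h⟩
    constructor
    · have h1 : (!decide ((0:ℝ) ≤ c - dr + mr)) ≤ !decide (c ≤ c) := by
        have := (h c).1
        rwa [(key c).1] at this
      have : decide (c ≤ c) ≤ decide ((0:ℝ) ≤ c - dr + mr) := by
        simpa using bool_not_le_not h1
      rw [decide_le_decide_iff] at this
      linarith [this (le_refl c)]
    · have h2 : (!decide (c ≤ df)) ≤ !decide ((0:ℝ) ≤ df - df) := by
        have := (h df).2
        rwa [(key df).2] at this
      have : decide ((0:ℝ) ≤ df - df) ≤ decide (c ≤ df) := by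
        simpa using bool_not_le_not h2
      rw [decide_le_decide_iff] at this
      linarith [this (by linarith)]
  · rintro ⟨h1, h2⟩
    refine ⟨?_, fun t => ⟨?_, ?_⟩⟩
    · obtain ⟨ts, a, b, c', d⟩ := isSignal_step_s8 c
      exact ⟨ts, a, b, fun x hx y hy => by have := c' x hx y hy; simp_all,
        fun k s hs => by have := d k s hs; simp_all⟩
    · rw [(key t).1]
      show (!decide ((0:ℝ) ≤ t - dr + mr)) ≤ !decide (c ≤ t)
      apply bool_not_le_not
      rw [decide_le_decide_iff]
      intro h; linarith
    · rw [(key t).2]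
      show (!decide (c ≤ t)) ≤ !decide ((0:ℝ) ≤ t - df)
      apply bool_not_le_not
      rw [decide_le_decide_iff]
      intro h; linarith

lemma sol_mono_not (mr dr : ℝ) (u x : ℝ → Bool)
    (h : x ∈ SolBDC mr dr mr dr u) :
    (fun t => !x t) ∈ SolBDC mr dr mr dr (fun t => !u t) := by
  obtain ⟨⟨ts, a, b, c, d⟩, hcond⟩ := h
  refine ⟨⟨ts, a, b, fun p hp q hq => by have := c p hp q hq; simp_all,
    fun k s hs => by have := d k s hs; simp_all⟩, fun t => ⟨?_, ?_⟩⟩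
  · rw [infOn_not]
    show (!supOn u _) ≤ !x t
    exact bool_not_le_not (hcond t).2
  · rw [supOn_not]
    show (!x t) ≤ !infOn u _
    exact bool_not_le_not (hcond t).1

theorem bdc_symmetrical_iff (mr dr mf df : ℝ)
    (hmr : 0 ≤ mr) (hmrdr : mr ≤ dr) (hmf : 0 ≤ mf) (hmfdf : mf ≤ df) (hcc1 : dr ≥ df - mf) (hcc2 : df ≥ dr - mr) :
    (∀ u x : ℝ → Bool, IsSignal u → IsSignal x →
        (x ∈ SolBDC mr dr mf df u ↔
          (fun t => !x t) ∈ SolBDC mr dr mf df (fun t => !u t))) ↔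
      (dr = df ∧ mr = mf) := by
  constructor
  · intro h
    have key : ∀ c : ℝ, (df - mf ≤ c ∧ c ≤ dr) ↔ (dr - mr ≤ c ∧ c ≤ df) := by
      intro c
      have h1 := h (fun t => decide ((0:ℝ) ≤ t)) (fun t => decide (c ≤ t))
        (isSignal_step_s8 0) (isSignal_step_s8 c)
      rw [mem_step mr dr mf df c hmr hmf, mem_step_not mr dr mf df c hmr hmf] at h1
      exact h1
    have hdrdf : dr ≤ df := ((key dr).mp ⟨by linarith, le_refl dr⟩).2
    have hdfdr : df ≤ dr := ((key df).mpr ⟨by linarith, le_refl df⟩).2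
    have hd : dr = df := le_antisymm hdrdf hdfdr
    have hmfmr : dr - mr ≤ df - mf := ((key (df - mf)).mp ⟨le_refl _, by linarith⟩).1
    have hmrmf : df - mf ≤ dr - mr := ((key (dr - mr)).mpr ⟨le_refl _, by linarith⟩).1
    exact ⟨hd, by linarith⟩
  · rintro ⟨rfl, rfl⟩
    intro u x hu hx
    constructor
    · exact sol_mono_not mr dr u x
    · intro h
      have := sol_mono_not mr dr _ _ h
      simpa using this
end

section
/- Let 0 ≤ m_r ≤ d_r, 0 ≤ m_f ≤ d_f, 0 ≤ m_r′ ≤ d_r′, 0 ≤ m_f′ ≤ d_f′ and δ_r ≥ 0, δ_f ≥ 0, δ_r′ ≥ 0, δ_f′ ≥ 0 be reals satisfying d_r ≥ d_f − m_f, d_f ≥ d_r − m_r, d_r′ ≥ d_f′ − m_f′, d_f′ ≥ d_r′ − m_r′, δ_r + δ_f ≤ m_r + m_f and δ_r′ + δ_f′ ≤ m_r′ + m_f′. Then for every signal u: ⋃_{x ∈ Sol_BDC^{m_r,d_r,m_f,d_f}(u) ∩ Sol_AIC^{δ_r,δ_f}} ( Sol_BDC^{m_r′,d_r′,m_f′,d_f′}(x)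 ∩ Sol_AIC^{δ_r′,δ_f′} ) ⊆ Sol_BDC^{m_r+m_r′, d_r+d_r′, m_f+m_f′, d_f+d_f′}(u) ∩ Sol_AIC^{δ_r′,δ_f′}. -/
open Set

lemma decide_mono {P Q : Prop} [Decidable P] [Decidable Q] (h : P → Q) :
    decide P ≤ decide Q := by
  by_cases hp : P <;> simp [hp, h]

theorem baidc_serial_connection (mr dr mf df : ℝ)
    (hmr : 0 ≤ mr) (hmrdr : mr ≤ dr) (hmf : 0 ≤ mf) (hmfdf : mf ≤ df) (hcc1 : dr ≥ df - mf) (hcc2 : df ≥ dr - mr)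
    (mr' dr' mf' df' : ℝ)
    (hmr' : 0 ≤ mr') (hmrdr' : mr' ≤ dr') (hmf' : 0 ≤ mf') (hmfdf' : mf' ≤ df')
    (hcc1' : dr' ≥ df' - mf') (hcc2' : df' ≥ dr' - mr')
    (δr δf δr' δf' : ℝ) (hδr : 0 ≤ δr) (hδf : 0 ≤ δf) (hδr' : 0 ≤ δr') (hδf' : 0 ≤ δf')
    (haic : δr + δf ≤ mr + mf) (haic' : δr' + δf' ≤ mr' + mf') :
    ∀ u : ℝ → Bool, IsSignal u →
      (⋃ x ∈ SolBDC mr dr mf df u ∩ SolAIC δr δf,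
          SolBDC mr' dr' mf' df' x ∩ SolAIC δr' δf') ⊆
        SolBDC (mr + mr') (dr + dr') (mf + mf') (df + df') u ∩ SolAIC δr' δf' := by
  classical
  intro u hu y hy
  rw [Set.mem_iUnion₂] at hy
  obtain ⟨x, ⟨⟨hxsig, hxbdc⟩, hxaic⟩, ⟨⟨hysig, hybdc⟩, hyaic⟩⟩ := hy
  refine ⟨⟨hysig, fun t => ⟨?_, ?_⟩⟩, hyaic⟩
  · refine le_trans ?_ (hybdc t).1
    unfold infOn
    apply decide_mono
    intro hbig ξ hξ
    have h1 := (hxbdc ξ).1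
    have h2 : infOn u (Set.Icc (ξ - dr) (ξ - dr + mr)) = true := by
      unfold infOn
      simp only [decide_eq_true_eq]
      intro η hη
      exact hbig η ⟨by linarith [hξ.1, hη.1], by linarith [hξ.2, hη.2]⟩
    rw [h2] at h1
    cases hx : x ξ
    · rw [hx] at h1; exact absurd h1 (by decide)
    · rfl
  · refine le_trans (hybdc t).2 ?_
    unfold supOn
    apply decide_mono
    rintro ⟨ξ, hξ, hxξ⟩
    have h1 := (hxbdc ξ).2
    rw [hxξ] at h1
    have h2 : supOn u (Set.Icc (ξ - df) (ξ - df + mf)) = true := by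
      cases hs : supOn u (Set.Icc (ξ - df) (ξ - df + mf))
      · rw [hs] at h1; exact absurd h1 (by decide)
      · rfl
    unfold supOn at h2
    simp only [decide_eq_true_eq] at h2
    obtain ⟨η, hη, huη⟩ := h2
    exact ⟨η, ⟨by linarith [hξ.1, hη.1], by linarith [hξ.2, hη.2]⟩, huη⟩
end

section
/- Let 0 ≤ μ_r ≤ δ_r and 0 ≤ μ_f ≤ δ_f be reals, let u be a signal, and let x ∈ Sol_RIC^{μ_r,δ_r,μ_f,δ_f}(u). If δ_r ≥ δ_f − μ_f and δ_f ≥ δ_r − μ_r, then x ∈ Sol_AIC^{δ_f−δ_r+μ_r, δ_r−δ_f+μ_f}. -/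
open Set

lemma right_const (x : ℝ → Bool) (hx : IsSignal x) (t : ℝ) :
    ∃ η > 0, ∀ s ∈ Set.Ico t (t + η), x s = x t := by
  obtain ⟨q, hmono, htend, hpre, hpiece⟩ := hx
  by_cases h0 : t < q 0
  · refine ⟨q 0 - t, by linarith, fun s hs => ?_⟩
    exact hpre s (by simp only [mem_Iio]; rcases hs with ⟨h1, h2⟩; linarith) t h0
  · push_neg at h0
    have hK : ∃ K, t < q K := (htend.eventually_gt_atTop t).exists
    have hkk : ∃ k, q k ≤ t ∧ t < q (k + 1) := by
      obtain ⟨K, hK'⟩ := hK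
      induction K with
      | zero => exact absurd hK' (by linarith)
      | succ n ih =>
        by_cases h : t < q n
        · exact ih h
        · exact ⟨n, le_of_not_gt h, hK'⟩
    obtain ⟨k, hk0, hk1⟩ := hkk
    refine ⟨q (k + 1) - t, by linarith, fun s hs => ?_⟩
    rcases hs with ⟨h1, h2⟩
    rw [hpiece k s ⟨le_trans hk0 h1, by linarith⟩, hpiece k t ⟨hk0, hk1⟩]

lemma first_change (x : ℝ → Bool) (hx : IsSignal x) (t ξ : ℝ) (ht : t < ξ)
    (hxt : x t = true) (hxξ : x ξ = false) :
    ∃ s, t < s ∧ s ≤ ξ ∧ x s = false ∧ ∀ r ∈ Set.Ioo t s, x r = true := by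
  set S : Set ℝ := {s | t < s ∧ s ≤ ξ ∧ x s = false} with hS
  have hξS : ξ ∈ S := ⟨ht, le_refl _, hxξ⟩
  have hbdd : BddBelow S := ⟨t, fun s hs => le_of_lt hs.1⟩
  set s0 := sInf S with hs0
  have hs0le : s0 ≤ ξ := csInf_le hbdd hξS
  obtain ⟨η, hη, hconst⟩ := right_const x hx t
  have hlb : t + η ≤ s0 := by
    apply le_csInf ⟨ξ, hξS⟩
    intro s hs
    by_contra h
    push_neg at h
    have heq := hconst s ⟨le_of_lt hs.1, h⟩
    rw [hxt, hs.2.2] at heq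
    exact Bool.false_ne_true heq
  have hts0 : t < s0 := by linarith
  have hxs0 : x s0 = false := by
    cases hx0 : x s0
    · rfl
    · exfalso
      obtain ⟨η2, hη2, hconst2⟩ := right_const x hx s0
      have hkey : s0 + η2 ≤ s0 := by
        apply le_csInf ⟨ξ, hξS⟩
        intro s hs
        by_contra hc
        push_neg at hc
        have hle : s0 ≤ s := csInf_le hbdd hs
        have heq := hconst2 s ⟨hle, hc⟩
        rw [hx0, hs.2.2] at heq
        exact Bool.false_ne_true heq
      linarith
  refine ⟨s0, hts0, hs0le, hxs0, fun r hr => ?_⟩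
  cases hxr : x r
  · exfalso
    have : s0 ≤ r := csInf_le hbdd ⟨hr.1, by linarith [hr.2], hxr⟩
    linarith [hr.2]
  · rfl

lemma leftVal_true_of (x : ℝ → Bool) (t s : ℝ) (h : t < s)
    (hc : ∀ r ∈ Set.Ioo t s, x r = true) : leftVal x s = true := by
  simp only [leftVal, decide_eq_true_eq]
  exact ⟨s - t, by linarith, fun r hr => hc r ⟨by linarith [hr.1], hr.2⟩⟩

lemma leftVal_false_of (x : ℝ → Bool) (t s : ℝ) (h : t < s)
    (hc : ∀ r ∈ Set.Ioo t s, x r = false) : leftVal x s = false := by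
  simp only [leftVal, decide_eq_false_iff_not]
  rintro ⟨ε, hε, hall⟩
  set r := (max t (s - ε) + s) / 2 with hr
  have h1 : t < r := by
    have ht' : t ≤ max t (s - ε) := le_max_left _ _
    simp only [hr]; linarith
  have h2 : s - ε < r := by
    have : s - ε ≤ max t (s - ε) := le_max_right _ _
    simp only [hr]; linarith
  have h3 : r < s := by
    have ha : max t (s - ε) < s := max_lt h (by linarith)
    simp only [hr]; linarith
  have heq := hall r ⟨h2, h3⟩
  rw [hc r ⟨h1, h3⟩] at heq
  exact Bool.false_ne_true heq

lemma isSignal_not (x : ℝ → Bool) (hx : IsSignal x) : IsSignal (fun r => !x r) := by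
  obtain ⟨q, h1, h2, h3, h4⟩ := hx
  refine ⟨q, h1, h2, fun a ha b hb => ?_, fun k s hs => ?_⟩
  · dsimp only; rw [h3 a ha b hb]
  · dsimp only; rw [h4 k s hs]

theorem ric_implies_aic (μr δr μf δf : ℝ)
    (hμr : 0 ≤ μr) (hμrδr : μr ≤ δr) (hμf : 0 ≤ μf) (hμfδf : μf ≤ δf)
    (u x : ℝ → Bool) (hu : IsSignal u)
    (hx : x ∈ SolRIC μr δr μf δf u)
    (h1 : δr ≥ δf - μf) (h2 : δf ≥ δr - μr) :
    x ∈ SolAIC (δf - δr + μr) (δr - δf + μf) := by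
  obtain ⟨hsig, hcond⟩ := hx
  refine ⟨hsig, fun t => ⟨?_, ?_⟩⟩
  · -- rise
    cases hL : (!leftVal x t && x t)
    · exact Bool.false_le _
    · have hrise := (hcond t).1
      rw [hL] at hrise
      have huinf : infOn u (Set.Icc (t - δr) (t - δr + μr)) = true :=
        (le_antisymm hrise (Bool.le_true _)).symm
      simp only [infOn, decide_eq_true_eq] at huinf
      have hxt : x t = true := ((Bool.and_eq_true _ _).mp hL).2
      apply le_of_eq
      symm
      simp only [infOn, decide_eq_true_eq]
      intro ξ hξ
      by_contra hc
      have hxξ : x ξ = false := by revert hc; cases x ξ <;> simp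
      have htξ : t < ξ := by
        rcases lt_or_eq_of_le hξ.1 with h | h
        · exact h
        · exfalso; rw [← h, hxt] at hxξ; exact Bool.false_ne_true hxξ.symm
      obtain ⟨s, hts, hsξ, hxs, hIoo⟩ := first_change x hsig t ξ htξ hxt hxξ
      have hLs : leftVal x s = true := leftVal_true_of x t s hts hIoo
      have hfall := (hcond s).2
      rw [hLs, hxs] at hfall
      simp only [Bool.not_false, Bool.and_self] at hfall
      have hninf : infOn (fun ξ => !u ξ) (Set.Icc (s - δf) (s - δf + μf)) = true :=
        (le_antisymm hfall (Bool.le_true _)).symm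
      simp only [infOn, decide_eq_true_eq] at hninf
      set w := max (t - δr) (s - δf) with hw
      have hw1 : w ∈ Set.Icc (t - δr) (t - δr + μr) := by
        refine ⟨le_max_left _ _, max_le (by linarith) ?_⟩
        have : s ≤ t + (δf - δr + μr) := le_trans hsξ hξ.2
        linarith
      have hw2 : w ∈ Set.Icc (s - δf) (s - δf + μf) :=
        ⟨le_max_right _ _, max_le (by linarith) (by linarith)⟩
      have hut := huinf w hw1
      have huf := hninf w hw2
      rw [hut] at huf
      exact Bool.false_ne_true (by simpa using huf)
  · -- fall
    cases hL : (leftVal x t && !x t)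
    · exact Bool.false_le _
    · have hfall := (hcond t).2
      rw [hL] at hfall
      have huinf : infOn (fun ξ => !u ξ) (Set.Icc (t - δf) (t - δf + μf)) = true :=
        (le_antisymm hfall (Bool.le_true _)).symm
      simp only [infOn, decide_eq_true_eq] at huinf
      have hxt : x t = false := by
        have h' := ((Bool.and_eq_true _ _).mp hL).2
        simpa using h'
      apply le_of_eq
      symm
      simp only [infOn, decide_eq_true_eq]
      intro ξ hξ
      by_contra hc
      have hxξ : x ξ = true := by revert hc; cases x ξ <;> simp
      have htξ : t < ξ := by
        rcases lt_or_eq_of_le hξ.1 with h | h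
        · exact h
        · exfalso; rw [← h, hxt] at hxξ; exact Bool.false_ne_true hxξ
      obtain ⟨s, hts, hsξ, hys, hIoo⟩ := first_change (fun r => !x r) (isSignal_not x hsig) t ξ htξ
        (by simp [hxt]) (by simp [hxξ])
      have hxs : x s = true := by simpa using hys
      have hIoo' : ∀ r ∈ Set.Ioo t s, x r = false := fun r hr => by simpa using hIoo r hr
      have hLs : leftVal x s = false := leftVal_false_of x t s hts hIoo'
      have hrise := (hcond s).1
      rw [hLs, hxs] at hrise
      simp only [Bool.not_false, Bool.and_self] at hrise
      have hpinf : infOn u (Set.Icc (s - δr) (s - δr + μr)) = true :=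
        (le_antisymm hrise (Bool.le_true _)).symm
      simp only [infOn, decide_eq_true_eq] at hpinf
      set w := max (t - δf) (s - δr) with hw
      have hw1 : w ∈ Set.Icc (t - δf) (t - δf + μf) := by
        refine ⟨le_max_left _ _, max_le (by linarith) ?_⟩
        have : s ≤ t + (δr - δf + μf) := le_trans hsξ hξ.2
        linarith
      have hw2 : w ∈ Set.Icc (s - δr) (s - δr + μr) :=
        ⟨le_max_right _ _, max_le (by linarith) (by linarith)⟩
      have hut := hpinf w hw2
      have huf := huinf w hw1
      rw [hut] at huf
      exact Bool.false_ne_true (by simpa using huf)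
end

section
/- Let 0 ≤ m_r ≤ d_r, 0 ≤ m_f ≤ d_f and 0 ≤ μ_r ≤ δ_r, 0 ≤ μ_f ≤ δ_f be reals. Then: (1) each of the four systems of inequalities (i) d_f−m_f ≤ δ_r ≤ d_r ≤ δ_r−μ_r+m_r and d_r−m_r ≤ δ_f ≤ d_f ≤ δ_f−μ_f+m_f; (ii) d_r−m_r+μ_r ≤ δ_r ≤ d_f−m_f ≤ d_r and d_f−m_f+μ_f ≤ δ_f ≤ d_r−m_r ≤ d_f; (iii) d_f−m_f ≤ δ_r ≤ d_r−m_r+μ_r ≤ d_r and d_r−m_r ≤ δ_f ≤ d_f−m_f+μ_f ≤ d_f; (iv) δ_r ≤ d_f−m_f ≤ δ_r+m_r−μ_r ≤ d_r and δ_f ≤ d_r−m_r ≤ δ_f+m_f−μ_f ≤ d_f, implies the consistency condition d_r ≥ d_f − m_f and d_f ≥ d_r − m_r; (2) the system d_f−m_f ≤ δ_f−μ_f ≤ δ_r ≤ d_r and d_r−m_r ≤ δ_r−μ_r ≤ δ_f ≤ d_f implies at least one of (i)–(iv). -/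
open Set

theorem bridc_consistency_strength (mr dr mf df : ℝ)
    (hmr : 0 ≤ mr) (hmrdr : mr ≤ dr) (hmf : 0 ≤ mf) (hmfdf : mf ≤ df)
    (μr δr μf δf : ℝ)
    (hμr : 0 ≤ μr) (hμrδr : μr ≤ δr) (hμf : 0 ≤ μf) (hμfδf : μf ≤ δf) :
    ((((df - mf ≤ δr ∧ δr ≤ dr ∧ dr ≤ δr - μr + mr) ∧
        (dr - mr ≤ δf ∧ δf ≤ df ∧ df ≤ δf - μf + mf)) ∨
      ((dr - mr + μr ≤ δr ∧ δr ≤ df - mf ∧ df - mf ≤ dr) ∧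
        (df - mf + μf ≤ δf ∧ δf ≤ dr - mr ∧ dr - mr ≤ df)) ∨
      ((df - mf ≤ δr ∧ δr ≤ dr - mr + μr ∧ dr - mr + μr ≤ dr) ∧
        (dr - mr ≤ δf ∧ δf ≤ df - mf + μf ∧ df - mf + μf ≤ df)) ∨
      ((δr ≤ df - mf ∧ df - mf ≤ δr + mr - μr ∧ δr + mr - μr ≤ dr) ∧
        (δf ≤ dr - mr ∧ dr - mr ≤ δf + mf - μf ∧ δf + mf - μf ≤ df))) →
        (dr ≥ df - mf ∧ df ≥ dr - mr)) ∧
    (((df - mf ≤ δf - μf ∧ δf - μf ≤ δr ∧ δr ≤ dr) ∧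
      (dr - mr ≤ δr - μr ∧ δr - μr ≤ δf ∧ δf ≤ df)) →
        (((df - mf ≤ δr ∧ δr ≤ dr ∧ dr ≤ δr - μr + mr) ∧
        (dr - mr ≤ δf ∧ δf ≤ df ∧ df ≤ δf - μf + mf)) ∨
         ((dr - mr + μr ≤ δr ∧ δr ≤ df - mf ∧ df - mf ≤ dr) ∧
        (df - mf + μf ≤ δf ∧ δf ≤ dr - mr ∧ dr - mr ≤ df)) ∨
         ((df - mf ≤ δr ∧ δr ≤ dr - mr + μr ∧ dr - mr + μr ≤ dr) ∧
        (dr - mr ≤ δf ∧ δf ≤ df - mf + μf ∧ df - mf + μf ≤ df)) ∨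
         ((δr ≤ df - mf ∧ df - mf ≤ δr + mr - μr ∧ δr + mr - μr ≤ dr) ∧
        (δf ≤ dr - mr ∧ dr - mr ≤ δf + mf - μf ∧ δf + mf - μf ≤ df)))) := by
  constructor
  · rintro (⟨⟨a1,a2,a3⟩,b1,b2,b3⟩|⟨⟨a1,a2,a3⟩,b1,b2,b3⟩|⟨⟨a1,a2,a3⟩,b1,b2,b3⟩|⟨⟨a1,a2,a3⟩,b1,b2,b3⟩) <;>
      constructor <;> linarith
  · rintro ⟨⟨a1,a2,a3⟩,b1,b2,b3⟩
    exact Or.inl ⟨⟨by linarith, a3, by linarith⟩, by linarith, b3, by linarith⟩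
end

section
/- Let 0 ≤ m_r ≤ d_r, 0 ≤ m_f ≤ d_f be reals with d_r ≥ d_f − m_f and d_f ≥ d_r − m_r, and let u, x be signals. The following are equivalent: (a) x ∈ Sol_BDC^{m_r,d_r,m_f,d_f}(u) ∩ Sol_RIC^{m_r,d_r,m_f,d_f}(u); (b) for all t ∈ ℝ: (¬x(t−0)) ∧ x(t) = (¬x(t−0)) ∧ ⋀_{ξ∈[t−d_r, t−d_r+m_r]} u(ξ) and x(t−0) ∧ (¬x(t)) = x(t−0) ∧ ⋀_{ξ∈[t−d_f, t−d_f+m_f]} ¬u(ξ). -/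
open Set

lemma infOn_true_iff (u : ℝ → Bool) (A : Set ℝ) :
    infOn u A = true ↔ ∀ ξ ∈ A, u ξ = true := by
  simp [infOn]

lemma supOn_false_of (u : ℝ → Bool) (A : Set ℝ)
    (h : infOn (fun ξ => !u ξ) A = true) : supOn u A = false := by
  simp only [infOn_true_iff] at h
  simp only [supOn, decide_eq_false_iff_not]
  rintro ⟨ξ, hξ, hu⟩
  have := h ξ hξ
  simp [hu] at this

theorem bridc_characterization (mr dr mf df : ℝ)
    (hmr : 0 ≤ mr) (hmrdr : mr ≤ dr) (hmf : 0 ≤ mf) (hmfdf : mf ≤ df) (hcc1 : dr ≥ df - mf) (hcc2 : df ≥ dr - mr)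
    (u x : ℝ → Bool) (hu : IsSignal u) (hx : IsSignal x) :
    x ∈ SolBDC mr dr mf df u ∩ SolRIC mr dr mf df u ↔
      (∀ t : ℝ,
        (!leftVal x t && x t) =
          (!leftVal x t && infOn u (Set.Icc (t - dr) (t - dr + mr))) ∧
        (leftVal x t && !x t) =
          (leftVal x t && infOn (fun ξ => !u ξ) (Set.Icc (t - df) (t - df + mf)))) := by
  constructor
  · rintro ⟨⟨-, hbdc⟩, ⟨-, hric⟩⟩ t
    obtain ⟨h1, h2⟩ := hbdc t
    obtain ⟨r1, r2⟩ := hric t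
    have key : infOn (fun ξ => !u ξ) (Set.Icc (t - df) (t - df + mf)) = true →
        x t = false := by
      intro h
      have hs := supOn_false_of u _ h
      cases hxa : x t
      · rfl
      · rw [hs, hxa] at h2; exact absurd h2 (by decide)
    set l := leftVal x t
    set a := x t
    set iU := infOn u (Set.Icc (t - dr) (t - dr + mr))
    set iN := infOn (fun ξ => !u ξ) (Set.Icc (t - df) (t - df + mf))
    cases hl : l <;> cases ha : a <;> cases hiU : iU <;> cases hiN : iN <;>
      simp_all <;>
      exact absurd (by assumption : (true : Bool) ≤ false) (by decide)
  · intro h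
    have clash : ∀ t : ℝ, infOn u (Set.Icc (t - dr) (t - dr + mr)) = true →
        infOn (fun ξ => !u ξ) (Set.Icc (t - df) (t - df + mf)) = true → False := by
      intro t h1 h2
      rw [infOn_true_iff] at h1 h2
      set ξ := max (t - dr) (t - df) with hξ
      have hm1 : ξ ∈ Set.Icc (t - dr) (t - dr + mr) := by
        constructor
        · exact le_max_left _ _
        · apply max_le <;> linarith
      have hm2 : ξ ∈ Set.Icc (t - df) (t - df + mf) := by
        constructor
        · exact le_max_right _ _
        · apply max_le <;> linarith
      have := h1 ξ hm1
      have := h2 ξ hm2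
      simp_all
    refine ⟨⟨hx, ?_⟩, ⟨hx, ?_⟩⟩ <;> intro t <;> obtain ⟨e1, e2⟩ := h t
    · constructor
      · -- infU ≤ x t
        cases hiU : infOn u (Set.Icc (t - dr) (t - dr + mr))
        · simp
        · cases ha : x t
          · cases hl : leftVal x t
            · rw [hl, ha, hiU] at e1; simp at e1
            · rw [hl, ha] at e2
              simp only [Bool.true_and, Bool.not_false] at e2
              exact absurd (clash t hiU e2.symm) id
          · simp
      · -- x t ≤ supU
        cases ha : x t
        · simp
        · cases hsU : supOn u (Set.Icc (t - df) (t - df + mf))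
          · have hiN : infOn (fun ξ => !u ξ) (Set.Icc (t - df) (t - df + mf)) = true := by
              simp only [supOn, decide_eq_false_iff_not] at hsU
              rw [infOn_true_iff]
              intro ξ hξ
              simp only [Bool.not_eq_true']
              by_contra hc
              exact hsU ⟨ξ, hξ, by simpa using hc⟩
            cases hl : leftVal x t
            · rw [hl, ha] at e1
              simp only [Bool.not_false, Bool.true_and] at e1
              exact absurd (clash t e1.symm hiN) id
            · rw [hl, ha, hiN] at e2; simp at e2
          · simp
    · constructor
      · rw [e1]
        cases leftVal x t <;> simp
      · rw [e2]
        cases leftVal x t <;> simp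
end
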